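/- In the pessimistic 3-SAT reduction PG: for any leader strategy s_n, any profile (a_1, a_2, a_3) with all three actions in A \ {f} and a_p ≠ a_q for some p ≠ q is not a Nash equilibrium, since some follower receives a payoff of −1 from at least one opponent, so her total payoff is at most 0, which is strictly less than what she obtains by deviating to f (a nonnegative amount plus at least one strictly positive term of 1/(2(r+1)) or r/(2(r+1)) or 1). -/
import Mathlib


variable {r : ℕ} {ClauseAct : Type}

/-- Expected utility of follower `p` playing the clause-assignment action `b`
against the leader strategy `sn` over `{a_{v_1},...,a_{v_r}, a_w}` (`none` is
`a_w`): if the `p`-th literal of `b` is positive with variable `v` the payoff is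
`1` on `a_v` and `0` elsewhere; if negative, `0` on `a_v` and `1` elsewhere. -/
noncomputable def uLn (lit : ClauseAct → Fin 3 → Fin r × Bool)
    (sn : Option (Fin r) → ℝ) (p : Fin 3) (b : ClauseAct) : ℝ :=
  if (lit b p).2 = true then sn (some (lit b p).1) else 1 - sn (some (lit b p).1)

/-- Payoff of follower `p` against follower `q` in the pessimistic 3-SAT
reduction (`none` is the action `f`). -/
noncomputable def pairPayPes (r : ℕ) {ClauseAct : Type} [DecidableEq ClauseAct]
    (lit : ClauseAct → Fin 3 → Fin r × Bool) (p q : Fin 3) :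
    Option ClauseAct → Option ClauseAct → ℝ
  | some b, some b' => if b = b' then 0 else -1
  | none, none => if p < q then 0 else 1
  | none, some b' =>
      if p < q then
        (if (lit b' p).2 = true then 1 / (2 * ((r : ℝ) + 1))
         else (r : ℝ) / (2 * ((r : ℝ) + 1)))
      else 0
  | some b, none =>
      if p < q then 1
      else
        (if (lit b p).2 = true then 1 / (2 * ((r : ℝ) + 1))
         else (r : ℝ) / (2 * ((r : ℝ) + 1)))

/-- Total utility of follower `p` in profile `σ`, given leader strategy `sn`. -/
noncomputable def totUPes (r : ℕ) {ClauseAct : Type} [DecidableEq ClauseAct]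
    (lit : ClauseAct → Fin 3 → Fin r × Bool) (sn : Option (Fin r) → ℝ)
    (σ : Fin 3 → Option ClauseAct) (p : Fin 3) : ℝ :=
  (match σ p with
    | none => 0
    | some b => uLn lit sn p b) +
  ∑ q ∈ Finset.univ.erase p, pairPayPes r lit p q (σ p) (σ q)


/-- Any profile in which all three followers play non-`f` actions but not all the
same action is not a Nash equilibrium: some follower strictly improves by
deviating to `f`. -/
theorem stmt_15 (r : ℕ) (hr : 1 ≤ r) (ClauseAct : Type) [DecidableEq ClauseAct]
    (lit : ClauseAct → Fin 3 → Fin r × Bool)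
    (sn : Option (Fin r) → ℝ) (hsn : sn ∈ stdSimplex ℝ (Option (Fin r)))
    (σ : Fin 3 → Option ClauseAct)
    (hall : ∀ p, σ p ≠ none)
    (hmm : ∃ p q : Fin 3, σ p ≠ σ q) :
    ∃ p : Fin 3,
      totUPes r lit sn (Function.update σ p none) p > totUPes r lit sn σ p := by
  obtain ⟨b0, hb0⟩ := Option.ne_none_iff_exists'.mp (hall 0)
  obtain ⟨b1, hb1⟩ := Option.ne_none_iff_exists'.mp (hall 1)
  obtain ⟨b2, hb2⟩ := Option.ne_none_iff_exists'.mp (hall 2)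
  refine ⟨0, ?_⟩
  obtain ⟨hsn0, hsn1⟩ := hsn
  have hsle : ∀ x, sn x ≤ 1 := by
    intro x
    calc sn x ≤ ∑ y, sn y := Finset.single_le_sum (fun i _ => hsn0 i) (Finset.mem_univ x)
    _ = 1 := hsn1
  have key : b0 ≠ b1 ∨ b0 ≠ b2 := by
    by_contra h
    push_neg at h
    obtain ⟨p, q, hpq⟩ := hmm
    apply hpq
    have hx : ∀ x : Fin 3, σ x = some b0 := by
      intro x; fin_cases x
      exacts [hb0, hb1.trans (congrArg _ h.1.symm), hb2.trans (congrArg _ h.2.symm)]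
    rw [hx p, hx q]
  have hE : (Finset.univ.erase (0:Fin 3)) = {1, 2} := by decide
  have hr' : (1:ℝ) ≤ (r:ℝ) := by exact_mod_cast hr
  have hden : (0:ℝ) < 2 * ((r:ℝ) + 1) := by linarith
  have hpos : (0:ℝ) < 1 / (2 * ((r:ℝ) + 1)) := by positivity
  simp only [totUPes, Function.update_self, hE, hb0,
    Finset.sum_insert (by decide : (1:Fin 3) ∉ ({2} : Finset (Fin 3))),
    Finset.sum_singleton,
    Function.update_of_ne (by decide : (1:Fin 3) ≠ 0),
    Function.update_of_ne (by decide : (2:Fin 3) ≠ 0), hb1, hb2]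
  have hu : uLn lit sn 0 b0 ≤ 1 := by
    unfold uLn
    split
    · exact hsle _
    · have := hsn0 (some (lit b0 0).1); linarith
  have h01 : (0:Fin 3) < 1 := by decide
  have h02 : (0:Fin 3) < 2 := by decide
  have hL1 : 1 / (2 * ((r:ℝ) + 1)) ≤ pairPayPes r lit 0 1 none (some b1) := by
    simp only [pairPayPes, if_pos h01]
    split
    · exact le_rfl
    · rw [div_le_div_iff₀ hden hden]; nlinarith
  have hL2 : 1 / (2 * ((r:ℝ) + 1)) ≤ pairPayPes r lit 0 2 none (some b2) := by
    simp only [pairPayPes, if_pos h02]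
    split
    · exact le_rfl
    · rw [div_le_div_iff₀ hden hden]; nlinarith
  have hp1 : pairPayPes r lit 0 1 (some b0) (some b1) ≤ 0 := by
    simp only [pairPayPes]; split <;> norm_num
  have hp2 : pairPayPes r lit 0 2 (some b0) (some b2) ≤ 0 := by
    simp only [pairPayPes]; split <;> norm_num
  have hneg : pairPayPes r lit 0 1 (some b0) (some b1) +
      pairPayPes r lit 0 2 (some b0) (some b2) ≤ -1 := by
    rcases key with h | h
    · have : pairPayPes r lit 0 1 (some b0) (some b1) = -1 := by
        simp only [pairPayPes, if_neg h]
      linarith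
    · have : pairPayPes r lit 0 2 (some b0) (some b2) = -1 := by
        simp only [pairPayPes, if_neg h]
      linarith
  set A := pairPayPes r lit 0 1 none (some b1) with hA
  set B := pairPayPes r lit 0 2 none (some b2) with hB
  set C := pairPayPes r lit 0 1 (some b0) (some b1) with hC
  set D := pairPayPes r lit 0 2 (some b0) (some b2) with hD
  show 0 + (A + B) > uLn lit sn 0 b0 + (C + D)
  linarith
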